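/- arXiv:1203.6001 — 3 statements merged into one kernel-verified Lean document; each statement's English description precedes it below -/
import Mathlib

section
/- Let A ∈ ℂ^{m×n_a} have unit ℓ2-norm columns a_1,…,a_{n_a} with coherence at most μ_a, let B ∈ ℂ^{m×n_b} have columns b_1,…,b_{n_b} with |⟨a_i, b_j⟩| ≤ μ_m for all i, j. Let X ⊆ {1,…,n_a} with |X| = n_x, E ⊆ {1,…,n_b} with |E| = n_e, set D_{X,E} = [A_X B_E], and suppose there exists λ > 0 with ‖D_{X,E} v‖₂ ≥ λ·‖v‖₂ for all v. If √(μ_a²·n_x + μ_m²·n_e) < λ, then for every γ ∉ X the column a_γ does not lie in the column space of D_{X,E}. -/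
/-!
If `D v = a_γ`, then `1 = ⟨a_γ, a_γ⟩ = ⟨Dᴴ a_γ, v⟩ ≤ ‖Dᴴ a_γ‖ ‖v‖` by Cauchy–Schwarz, while
`λ ‖v‖ ≤ ‖D v‖ = 1`. The entries of `Dᴴ a_γ` are the inner products of `a_γ` with the columns of
`A_X` (bounded by `μ_a`, as `γ ∉ X`) and of `B_E` (bounded by `μ_m`), so
`‖Dᴴ a_γ‖ ≤ √(μ_a² n_x + μ_m² n_e) < λ`, which makes the two inequalities incompatible.
-/

open scoped Matrix

/-- The Euclidean (ℓ2) norm of a complex vector. -/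
noncomputable def e2norm {ι : Type*} [Fintype ι] (v : ι → ℂ) : ℝ :=
  Real.sqrt (∑ i, ‖v i‖ ^ 2)

/-- The submatrix of `M` consisting of the columns indexed by `S`. -/
def subCols {m n : ℕ} (M : Matrix (Fin m) (Fin n) ℂ) (S : Finset (Fin n)) :
    Matrix (Fin m) ↥S ℂ := M.submatrix id (fun j => (j : Fin n))

section e2norm

variable {ι : Type*} [Fintype ι]

lemma e2norm_nonneg (v : ι → ℂ) : 0 ≤ e2norm v := Real.sqrt_nonneg _

lemma e2norm_eq_norm_toLp (v : ι → ℂ) : e2norm v = ‖WithLp.toLp 2 v‖ := by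
  simp [e2norm, EuclideanSpace.norm_eq]

lemma norm_dotProduct_star_le (v w : ι → ℂ) : ‖v ⬝ᵥ star w‖ ≤ e2norm w * e2norm v := by
  simpa only [e2norm_eq_norm_toLp, EuclideanSpace.inner_toLp_toLp] using
    norm_inner_le_norm (𝕜 := ℂ) (WithLp.toLp 2 w) (WithLp.toLp 2 v)

lemma norm_dotProduct_star_self (v : ι → ℂ) : ‖v ⬝ᵥ star v‖ = e2norm v ^ 2 := by
  rw [e2norm_eq_norm_toLp, ← EuclideanSpace.inner_toLp_toLp, inner_self_eq_norm_sq_to_K]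
  norm_cast
  exact abs_of_nonneg (by positivity)

lemma e2norm_sum_type_le {α β : Type*} [Fintype α] [Fintype β] (w : α ⊕ β → ℂ) {a b : ℝ}
    (ha : ∀ i, ‖w (Sum.inl i)‖ ≤ a) (hb : ∀ j, ‖w (Sum.inr j)‖ ≤ b) :
    e2norm w ≤ Real.sqrt (a ^ 2 * Fintype.card α + b ^ 2 * Fintype.card β) := by
  refine Real.sqrt_le_sqrt ?_
  rw [Fintype.sum_sum_type]
  have hα : ∑ i, ‖w (Sum.inl i)‖ ^ 2 ≤ ∑ _i : α, a ^ 2 :=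
    Finset.sum_le_sum fun i _ => pow_le_pow_left₀ (norm_nonneg _) (ha i) 2
  have hβ : ∑ j, ‖w (Sum.inr j)‖ ^ 2 ≤ ∑ _j : β, b ^ 2 :=
    Finset.sum_le_sum fun j _ => pow_le_pow_left₀ (norm_nonneg _) (hb j) 2
  simp only [Finset.sum_const, Finset.card_univ, nsmul_eq_mul] at hα hβ
  linarith

end e2norm

lemma not_exists_mulVec_eq_of_e2norm_conjTranspose_mulVec_lt {m ι : Type*} [Fintype m]
    [Fintype ι] (M : Matrix m ι ℂ) (u : m → ℂ) {l : ℝ}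
    (hM : ∀ v, l * e2norm v ≤ e2norm (M *ᵥ v)) (hu : e2norm u = 1)
    (hlt : e2norm (Mᴴ *ᵥ u) < l) : ¬ ∃ v, M *ᵥ v = u := by
  rintro ⟨v, hv⟩
  have hadj : v ⬝ᵥ star (Mᴴ *ᵥ u) = u ⬝ᵥ star u := by
    rw [Matrix.star_mulVec, Matrix.conjTranspose_conjTranspose, dotProduct_comm,
      ← Matrix.dotProduct_mulVec, hv, dotProduct_comm]
  have hone : 1 ≤ e2norm (Mᴴ *ᵥ u) * e2norm v := by
    simpa [hadj, norm_dotProduct_star_self, hu] using norm_dotProduct_star_le v (Mᴴ *ᵥ u)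
  have hbelow : l * e2norm v ≤ 1 := by simpa [hv, hu] using hM v
  have hv_pos : 0 < e2norm v := by
    refine (e2norm_nonneg v).lt_of_ne fun h => ?_
    rw [← h, mul_zero] at hone
    linarith
  linarith [mul_lt_mul_of_pos_right hlt hv_pos]

theorem stmt10_general {m na nb : ℕ} (A : Matrix (Fin m) (Fin na) ℂ) (B : Matrix (Fin m) (Fin nb) ℂ)
    (μa μm : ℝ)
    (hunit : ∀ j, ∑ i, ‖A i j‖ ^ 2 = 1)
    (hcohA : ∀ i j, i ≠ j → ‖∑ k, (starRingEnd ℂ) (A k i) * A k j‖ ≤ μa)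
    (hmut : ∀ i j, ‖∑ k, (starRingEnd ℂ) (A k i) * B k j‖ ≤ μm)
    (X : Finset (Fin na)) (E : Finset (Fin nb)) (nx ne : ℕ)
    (hX : X.card = nx) (hE : E.card = ne)
    (l : ℝ)
    (hD : ∀ v : ↥X ⊕ ↥E → ℂ,
      l * e2norm v ≤ e2norm ((Matrix.fromCols (subCols A X) (subCols B E)).mulVec v))
    (hlt : Real.sqrt (μa ^ 2 * nx + μm ^ 2 * ne) < l)
    (γ : Fin na) (hγ : γ ∉ X) :
    ¬ ∃ v : ↥X ⊕ ↥E → ℂ,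
        (Matrix.fromCols (subCols A X) (subCols B E)).mulVec v = (fun i => A i γ) := by
  set D := Matrix.fromCols (subCols A X) (subCols B E)
  have hcohX : ∀ j : ↥X, ‖(Dᴴ *ᵥ fun i => A i γ) (Sum.inl j)‖ ≤ μa := fun j =>
    hcohA j γ fun h => hγ (h ▸ j.2)
  have hmutE : ∀ j : ↥E, ‖(Dᴴ *ᵥ fun i => A i γ) (Sum.inr j)‖ ≤ μm := fun j => by
    refine le_of_eq_of_le ?_ (hmut γ j)
    rw [← Complex.norm_conj]
    simp [D, Matrix.mulVec, dotProduct, subCols, mul_comm]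
  refine not_exists_mulVec_eq_of_e2norm_conjTranspose_mulVec_lt D _ hD
    (by simp [e2norm, hunit γ]) (lt_of_le_of_lt ?_ hlt)
  simpa [hX, hE] using e2norm_sum_type_le _ hcohX hmutE

/-- under the coherence bounds and the lower singular-value bound
`‖D_{X,E} v‖₂ ≥ λ ‖v‖₂`, if `√(μa² n_x + μm² n_e) < λ`, then for every `γ ∉ X` the column
`a_γ` does not lie in the column space of `D_{X,E} = [A_X B_E]`. -/
theorem stmt10 {m na nb : ℕ} (A : Matrix (Fin m) (Fin na) ℂ) (B : Matrix (Fin m) (Fin nb) ℂ)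
    (μa μm : ℝ)
    (hunit : ∀ j, ∑ i, ‖A i j‖ ^ 2 = 1)
    (hcohA : ∀ i j, i ≠ j → ‖∑ k, (starRingEnd ℂ) (A k i) * A k j‖ ≤ μa)
    (hmut : ∀ i j, ‖∑ k, (starRingEnd ℂ) (A k i) * B k j‖ ≤ μm)
    (X : Finset (Fin na)) (E : Finset (Fin nb)) (nx ne : ℕ)
    (hX : X.card = nx) (hE : E.card = ne)
    (l : ℝ) (hl : 0 < l)
    (hD : ∀ v : ↥X ⊕ ↥E → ℂ,
      l * e2norm v ≤ e2norm ((Matrix.fromCols (subCols A X) (subCols B E)).mulVec v))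
    (hlt : Real.sqrt (μa ^ 2 * nx + μm ^ 2 * ne) < l)
    (γ : Fin na) (hγ : γ ∉ X) :
    ¬ ∃ v : ↥X ⊕ ↥E → ℂ,
        (Matrix.fromCols (subCols A X) (subCols B E)).mulVec v = (fun i => A i γ) :=
  stmt10_general A B μa μm hunit hcohA hmut X E nx ne hX hE l hD hlt γ hγ
end

section
/- (Exact recovery condition for complex Basis Pursuit.) Let D ∈ ℂ^{m×n} with columns d_1,…,d_n, let s ∈ ℂ^n with support S = {j : s_j ≠ 0}, and let y = D s. Suppose the column submatrix D_S has full column rank and there exists a vector h ∈ ℂ^m such that ⟨d_j, h⟩ = sign(s_j) for all j ∈ S and |⟨h, d_γ⟩| < 1 for all γ ∉ S. Then s is the unique minimizer of the ℓ1-norm over the affine set {z ∈ ℂ^n : D z = y}; that is, every z ≠ s with D z = y satisfies ‖z‖₁ > ‖s‖₁. -/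
open scoped Matrix

theorem norm_dotProduct_lt_sum_norm {R ι : Type*} [NormedRing R] [Fintype ι] {c w : ι → R}
    (hc : ∀ j, ‖c j‖ ≤ 1) {γ : ι} (hcγ : ‖c γ‖ < 1) (hwγ : w γ ≠ 0) :
    ‖c ⬝ᵥ w‖ < ∑ j, ‖w j‖ :=
  calc ‖c ⬝ᵥ w‖ ≤ ∑ j, ‖c j * w j‖ := norm_sum_le _ _
    _ ≤ ∑ j, ‖c j‖ * ‖w j‖ := Finset.sum_le_sum fun j _ => norm_mul_le _ _
    _ < ∑ j, ‖w j‖ := by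
      refine Finset.sum_lt_sum (fun j _ => ?_) ⟨γ, Finset.mem_univ γ, ?_⟩
      · exact mul_le_of_le_one_left (norm_nonneg _) (hc j)
      · exact mul_lt_of_lt_one_left (norm_pos_iff.mpr hwγ) hcγ

theorem RCLike.conj_div_norm_mul_self {𝕜 : Type*} [RCLike 𝕜] (x : 𝕜) :
    starRingEnd 𝕜 (x / (‖x‖ : 𝕜)) * x = ‖x‖ := by
  rw [map_div₀, RCLike.conj_ofReal, div_mul_eq_mul_div, RCLike.conj_mul, sq,
    mul_div_assoc]
  rcases eq_or_ne x 0 with rfl | hx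
  · simp
  · rw [div_self (by exact_mod_cast norm_ne_zero_iff.mpr hx), mul_one]

theorem RCLike.norm_div_norm_le_one {𝕜 : Type*} [RCLike 𝕜] (x : 𝕜) :
    ‖x / (‖x‖ : 𝕜)‖ ≤ 1 := by
  rw [norm_div, RCLike.norm_ofReal, abs_norm]
  exact div_self_le_one _

theorem mulVec_eq_subCols_mulVec {m n : ℕ} (D : Matrix (Fin m) (Fin n) ℂ) (S : Finset (Fin n))
    {w : Fin n → ℂ} (hw : ∀ j ∉ S, w j = 0) :
    D *ᵥ w = subCols D S *ᵥ fun j : S => w j := by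
  funext i
  simp only [Matrix.mulVec, dotProduct, subCols, Matrix.submatrix_apply, id]
  rw [Finset.sum_coe_sort S fun j => D i j * w j]
  exact (Finset.sum_subset (Finset.subset_univ S) fun j _ hj => by rw [hw j hj, mul_zero]).symm

theorem eq_of_mulVec_eq_of_subCols_injective {m n : ℕ} {D : Matrix (Fin m) (Fin n) ℂ}
    {S : Finset (Fin n)} (hinj : Function.Injective (subCols D S).mulVecLin)
    {z s : Fin n → ℂ} (hz : ∀ j ∉ S, z j = 0) (hs : ∀ j ∉ S, s j = 0)
    (hDzs : D *ᵥ z = D *ᵥ s) : z = s := by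
  have hS : (fun j : S => z j) = fun j : S => s j :=
    hinj (by simpa only [Matrix.mulVecLin_apply, ← mulVec_eq_subCols_mulVec D S hz,
      ← mulVec_eq_subCols_mulVec D S hs] using hDzs)
  funext j
  by_cases hj : j ∈ S
  · exact congrFun hS ⟨j, hj⟩
  · rw [hz j hj, hs j hj]

/-- exact recovery condition for complex Basis Pursuit, Thm. 5 of
Tropp 2005: if `D_S` has full column rank (where `S = supp s`) and there is a dual
certificate `h` with `⟨d_j, h⟩ = sign(s_j)` on `S` and `|⟨h, d_γ⟩| < 1` off `S`, then `s` is
the unique ℓ1 minimizer subject to `D z = D s`. -/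
theorem stmt17 {m n : ℕ} (D : Matrix (Fin m) (Fin n) ℂ) (s : Fin n → ℂ)
    (S : Finset (Fin n)) (hS : ∀ j, j ∈ S ↔ s j ≠ 0)
    (hfull : Function.Injective (subCols D S).mulVecLin)
    (h : Fin m → ℂ)
    (hsign : ∀ j ∈ S, ∑ i, (starRingEnd ℂ) (D i j) * h i = s j / ((‖s j‖ : ℝ) : ℂ))
    (hdual : ∀ γ ∉ S, ‖∑ i, (starRingEnd ℂ) (h i) * D i γ‖ < 1) :
    ∀ z : Fin n → ℂ, D.mulVec z = D.mulVec s → z ≠ s →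
      ∑ j, ‖s j‖ < ∑ j, ‖z j‖ := by
  intro z hDz hne
  set c := star h ᵥ* D
  have hs0 : ∀ j ∉ S, s j = 0 := fun j hj => not_not.mp fun hsj => hj ((hS j).2 hsj)
  have hcS : ∀ j ∈ S, c j = starRingEnd ℂ (s j / ((‖s j‖ : ℝ) : ℂ)) := fun j hj => by
    show ∑ i, star (h i) * D i j = _
    rw [← hsign j hj, map_sum]
    exact Finset.sum_congr rfl fun i _ => by rw [map_mul, Complex.conj_conj, mul_comm]; rfl
  have hc1 : ∀ j, ‖c j‖ ≤ 1 := fun j => by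
    by_cases hj : j ∈ S
    · rw [hcS j hj, RCLike.norm_conj]; exact RCLike.norm_div_norm_le_one (s j)
    · exact (hdual j hj).le
  have hcs : c ⬝ᵥ s = ((∑ j, ‖s j‖ : ℝ) : ℂ) := by
    rw [Complex.ofReal_sum]
    refine Finset.sum_congr rfl fun j _ => ?_
    by_cases hj : j ∈ S
    · rw [hcS j hj]; exact RCLike.conj_div_norm_mul_self (s j)
    · simp [hs0 j hj]
  have hcz : c ⬝ᵥ z = c ⬝ᵥ s := by
    simp only [c, ← Matrix.dotProduct_mulVec, hDz]
  obtain ⟨γ, hγS, hzγ⟩ : ∃ γ ∉ S, z γ ≠ 0 := by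
    by_contra! hz
    exact hne (eq_of_mulVec_eq_of_subCols_injective hfull hz hs0 hDz)
  calc ∑ j, ‖s j‖ = ‖c ⬝ᵥ z‖ := by
        rw [hcz, hcs, Complex.norm_real, Real.norm_of_nonneg (by positivity)]
    _ < ∑ j, ‖z j‖ := norm_dotProduct_lt_sum_norm hc1 (hdual γ hγS) hzγ
end

section
/- (Exact recovery condition for Basis Pursuit with known corruption support.) Let A ∈ ℂ^{m×n_a} with columns a_1,…,a_{n_a} and B ∈ ℂ^{m×n_b}. Let x ∈ ℂ^{n_a} have support X and e ∈ ℂ^{n_b} have support contained in a known set E ⊆ {1,…,n_b}, and let y = A x + B e. Suppose D_{X,E} = [A_X B_E] has full column rank and there exists h ∈ ℂ^m such that ⟨a_j, h⟩ = sign(x_j) for all j ∈ X, ⟨b_j, h⟩ = sign(e_j) for all j ∈ E with e_j ≠ 0 (and ⟨b_j, h⟩ arbitrary prescribed dual values for j ∈ E with e_j = 0, i.e., D_{X,E}* h = sign of the concatenated coefficient vector), and |⟨h, a_γ⟩| < 1 for all γ ∉ X. Then (x, e) is the unique minimizer of ‖x'‖₁ + ‖e'‖₁ over all pairs (x', e')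 with x' ∈ ℂ^{n_a}, e' ∈ ℂ^{n_b} supported in E, and A x' + B e' = y. -/
/-!
Put `u = x' - x`, `v = e' - e`, so that `A u + B v = 0`, and let `w = h* A`, `w' = h* B`.
Each coordinate of the certificate is a subgradient of the modulus at the corresponding
coefficient, which gives `‖x_j‖ + Re (w_j u_j) ≤ ‖x'_j‖` and likewise for `e`; summing, the real
parts add up to `Re (h* (A u + B v)) = 0`, so `‖x‖₁ + ‖e‖₁ ≤ ‖x'‖₁ + ‖e'‖₁`. The inequality is
strict as soon as `u` is nonzero off `X`, because there `‖w_γ‖ < 1`; if `u` vanishes off `X`,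
then `(u, v)` lies in the kernel of `[A_X B_E]`, which is trivial.
-/

open scoped Matrix

open scoped ComplexConjugate

namespace Complex

/-- Exactly when `‖w‖ ≤ 1` and `w c = ‖c‖` is `z ↦ Re (w z)` a subgradient of `‖·‖` at `c`. -/
def IsNormSubgradient (w c : ℂ) : Prop := ‖w‖ ≤ 1 ∧ w * c = ‖c‖

theorem isNormSubgradient_of_conj_eq_div_norm {w c : ℂ} (hc : c ≠ 0)
    (hw : conj w = c / ‖c‖) : IsNormSubgradient w c := by
  have hc' : (‖c‖ : ℂ) ≠ 0 := by simpa using hc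
  have hw' : w = conj c / ‖c‖ := by
    simpa [map_div₀, conj_ofReal] using congrArg conj hw
  refine ⟨by simp [hw', hc], ?_⟩
  rw [hw', div_mul_eq_mul_div, conj_mul', sq, mul_div_assoc, div_self hc', mul_one]

theorem isNormSubgradient_of_sign {w c : ℂ} (hsign : c ≠ 0 → conj w = c / ‖c‖)
    (hzero : c = 0 → ‖w‖ ≤ 1) : IsNormSubgradient w c := by
  by_cases hc : c = 0
  · subst hc
    exact ⟨hzero rfl, by simp⟩
  · exact isNormSubgradient_of_conj_eq_div_norm hc (hsign hc)

namespace IsNormSubgradient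

variable {w c : ℂ}

theorem eq_zero_of_norm_lt_one (hw : IsNormSubgradient w c) (hlt : ‖w‖ < 1) : c = 0 := by
  have hc : ‖c‖ = ‖w‖ * ‖c‖ := by
    rw [← norm_mul, hw.2, norm_real, Real.norm_of_nonneg (norm_nonneg c)]
  by_contra h
  have := mul_lt_of_lt_one_left (norm_pos_iff.mpr h) hlt
  linarith

theorem norm_add_re_mul_sub_le (hw : IsNormSubgradient w c) (c' : ℂ) :
    ‖c‖ + (w * (c' - c)).re ≤ ‖c'‖ :=
  calc ‖c‖ + (w * (c' - c)).re = (w * c').re := by simp [mul_sub, hw.2]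
    _ ≤ ‖w * c'‖ := re_le_norm _
    _ = ‖w‖ * ‖c'‖ := norm_mul _ _
    _ ≤ ‖c'‖ := mul_le_of_le_one_left (norm_nonneg _) hw.1

theorem norm_add_re_mul_sub_lt (hw : IsNormSubgradient w c) (hlt : ‖w‖ < 1) {c' : ℂ}
    (hc' : c' ≠ c) : ‖c‖ + (w * (c' - c)).re < ‖c'‖ := by
  obtain rfl := hw.eq_zero_of_norm_lt_one hlt
  rw [sub_zero]
  calc ‖(0 : ℂ)‖ + (w * c').re ≤ ‖w‖ * ‖c'‖ := by
        simpa using (re_le_norm _).trans (norm_mul _ _).le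
    _ < ‖c'‖ := mul_lt_of_lt_one_left (norm_pos_iff.mpr hc') hlt

end IsNormSubgradient

end Complex

open Complex

section DualCertificate

variable {ι : Type*} [Fintype ι] {w c c' : ι → ℂ}

theorem sum_norm_add_re_dotProduct_sub_le
    (hw : ∀ j, c' j ≠ c j → IsNormSubgradient (w j) (c j)) :
    ∑ j, ‖c j‖ + (w ⬝ᵥ (c' - c)).re ≤ ∑ j, ‖c' j‖ := by
  rw [dotProduct, re_sum, ← Finset.sum_add_distrib]
  refine Finset.sum_le_sum fun j _ => ?_
  by_cases hj : c' j = c j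
  · simp [hj]
  · exact (hw j hj).norm_add_re_mul_sub_le (c' j)

theorem sum_norm_add_re_dotProduct_sub_lt
    (hw : ∀ j, c' j ≠ c j → IsNormSubgradient (w j) (c j)) {γ : ι} (hγ : ‖w γ‖ < 1)
    (hcγ : c' γ ≠ c γ) : ∑ j, ‖c j‖ + (w ⬝ᵥ (c' - c)).re < ∑ j, ‖c' j‖ := by
  rw [dotProduct, re_sum, ← Finset.sum_add_distrib]
  refine Finset.sum_lt_sum (fun j _ => ?_) ⟨γ, Finset.mem_univ γ, ?_⟩
  · by_cases hj : c' j = c j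
    · simp [hj]
    · exact (hw j hj).norm_add_re_mul_sub_le (c' j)
  · exact (hw γ hcγ).norm_add_re_mul_sub_lt hγ hcγ

end DualCertificate

theorem conj_vecMul_star_apply {m n : ℕ} (h : Fin m → ℂ) (A : Matrix (Fin m) (Fin n) ℂ)
    (j : Fin n) : conj ((star h ᵥ* A) j) = ∑ i, conj (A i j) * h i := by
  simp [Matrix.vecMul, dotProduct, map_sum, mul_comm]

theorem subCols_mulVec_of_forall_notMem_eq_zero {m n : ℕ} (M : Matrix (Fin m) (Fin n) ℂ)
    (S : Finset (Fin n)) {u : Fin n → ℂ} (hu : ∀ j ∉ S, u j = 0) :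
    subCols M S *ᵥ (fun j : S => u j) = M *ᵥ u := by
  funext i
  simp only [Matrix.mulVec, dotProduct, subCols, Matrix.submatrix_apply, id]
  rw [Finset.sum_coe_sort S (fun j => M i j * u j)]
  exact Finset.sum_subset (Finset.subset_univ S) fun j _ hj => by rw [hu j hj, mul_zero]

theorem eq_zero_of_injective_fromCols_subCols {m na nb : ℕ} {A : Matrix (Fin m) (Fin na) ℂ}
    {B : Matrix (Fin m) (Fin nb) ℂ} {X : Finset (Fin na)} {E : Finset (Fin nb)}
    (hinj : Function.Injective (Matrix.fromCols (subCols A X) (subCols B E)).mulVecLin)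
    {u : Fin na → ℂ} {v : Fin nb → ℂ} (hu : ∀ j ∉ X, u j = 0) (hv : ∀ j ∉ E, v j = 0)
    (hker : A *ᵥ u + B *ᵥ v = 0) : u = 0 ∧ v = 0 := by
  have hzero : Sum.elim (fun j : X => u j) (fun j : E => v j) = 0 := by
    apply hinj
    rw [map_zero, Matrix.mulVecLin_apply, Matrix.fromCols_mulVec_sumElim,
      subCols_mulVec_of_forall_notMem_eq_zero A X hu,
      subCols_mulVec_of_forall_notMem_eq_zero B E hv, hker]
  constructor
  · funext j
    by_cases hj : j ∈ X
    · exact congrFun hzero (Sum.inl ⟨j, hj⟩)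
    · exact hu j hj
  · funext j
    by_cases hj : j ∈ E
    · exact congrFun hzero (Sum.inr ⟨j, hj⟩)
    · exact hv j hj

/-- exact recovery condition for Basis Pursuit with known corruption
support: let `y = A x + B e` with `supp x = X` and `supp e ⊆ E`. If `D_{X,E} = [A_X B_E]`
has full column rank and there is a dual certificate `h` with `⟨a_j, h⟩ = sign(x_j)` on `X`,
`⟨b_j, h⟩ = sign(e_j)` on `E` where `e_j ≠ 0` (and `⟨b_j, h⟩` a prescribed sign value, i.e.
unimodular, on `E` where `e_j = 0`, so that `D_{X,E}* h` is the sign of the concatenated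
coefficient vector), and `|⟨h, a_γ⟩| < 1` for `γ ∉ X`, then `(x, e)` is the unique minimizer
of `‖x'‖₁ + ‖e'‖₁` over pairs with `e'` supported in `E` and `A x' + B e' = y`. -/
theorem stmt18 {m na nb : ℕ} (A : Matrix (Fin m) (Fin na) ℂ) (B : Matrix (Fin m) (Fin nb) ℂ)
    (x : Fin na → ℂ) (e : Fin nb → ℂ)
    (X : Finset (Fin na)) (hX : ∀ j, j ∈ X ↔ x j ≠ 0)
    (E : Finset (Fin nb)) (hE : ∀ j, e j ≠ 0 → j ∈ E)
    (hfull : Function.Injective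
      (Matrix.fromCols (subCols A X) (subCols B E)).mulVecLin)
    (h : Fin m → ℂ)
    (hsignx : ∀ j ∈ X, ∑ i, (starRingEnd ℂ) (A i j) * h i = x j / (‖x j‖ : ℂ))
    (hsigne : ∀ j ∈ E, e j ≠ 0 →
      ∑ i, (starRingEnd ℂ) (B i j) * h i = e j / (‖e j‖ : ℂ))
    (hsigne0 : ∀ j ∈ E, e j = 0 →
      ‖∑ i, (starRingEnd ℂ) (B i j) * h i‖ = 1)
    (hdual : ∀ γ ∉ X, ‖∑ i, (starRingEnd ℂ) (h i) * A i γ‖ < 1) :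
    ∀ (x' : Fin na → ℂ) (e' : Fin nb → ℂ), (∀ j, e' j ≠ 0 → j ∈ E) →
      A.mulVec x' + B.mulVec e' = A.mulVec x + B.mulVec e →
      (x', e') ≠ (x, e) →
      ∑ j, ‖x j‖ + ∑ j, ‖e j‖ <
        ∑ j, ‖x' j‖ + ∑ j, ‖e' j‖ := by
  intro x' e' he' heq hne
  have hvE : ∀ j ∉ E, (e' - e) j = 0 := fun j hj => by
    simp [not_imp_comm.1 (he' j) hj, not_imp_comm.1 (hE j) hj]
  have hker : A *ᵥ (x' - x) + B *ᵥ (e' - e) = 0 := by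
    rw [Matrix.mulVec_sub, Matrix.mulVec_sub, sub_add_sub_comm, heq, sub_self]
  obtain ⟨γ, hγX, hγ⟩ : ∃ γ ∉ X, (x' - x) γ ≠ 0 := by
    by_contra! hu
    obtain ⟨hu0, hv0⟩ := eq_zero_of_injective_fromCols_subCols hfull hu hvE hker
    exact hne (Prod.ext (sub_eq_zero.1 hu0) (sub_eq_zero.1 hv0))
  have hcert : (star h ᵥ* A) ⬝ᵥ (x' - x) + (star h ᵥ* B) ⬝ᵥ (e' - e) = 0 := by
    rw [← Matrix.dotProduct_mulVec, ← Matrix.dotProduct_mulVec, ← dotProduct_add, hker,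
      dotProduct_zero]
  have hsubx : ∀ j, IsNormSubgradient ((star h ᵥ* A) j) (x j) := fun j =>
    isNormSubgradient_of_sign
      (fun hj => (conj_vecMul_star_apply h A j).trans (hsignx j ((hX j).2 hj)))
      (fun hj => (hdual j fun hjX => (hX j).1 hjX hj).le)
  have hsube : ∀ j ∈ E, IsNormSubgradient ((star h ᵥ* B) j) (e j) := fun j hj =>
    isNormSubgradient_of_sign
      (fun hej => (conj_vecMul_star_apply h B j).trans (hsigne j hj hej))
      (fun hej => by rw [← norm_conj, conj_vecMul_star_apply, hsigne0 j hj hej])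
  have hxsum := sum_norm_add_re_dotProduct_sub_lt (fun j _ => hsubx j) (hdual γ hγX)
    (sub_ne_zero.1 hγ)
  have hesum := sum_norm_add_re_dotProduct_sub_le fun j hj =>
    hsube j (by_contra fun hjE => hj (sub_eq_zero.1 (hvE j hjE)))
  have hcert_re := congrArg re hcert
  rw [add_re, zero_re] at hcert_re
  linarith
end
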